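/- arXiv:2010.09111 — 2 statements merged into one kernel-verified Lean document; each statement's English description precedes it below -/
import Mathlib

section
/- Let P : C^op → Pos be a slat-doctrine over a category C with finite products and let P^un be its universal completion. For objects A₁, A₂ of C and the projection pr₁ : A₁×A₂ → A₁, the assignment (A₁×A₂, B, β) ↦ (A₁, A₂×B, β) (reading β ∈ P(A₁×A₂×B) as an element of P(A₁×(A₂×B)) via the associativity isomorphism) defines a monotone map ∀_{pr₁} : P^un(A₁×A₂) → P^un(A₁) which is right adjoint to the reindexing P^un_{pr₁} : P^un(A₁) → P^un(A₁×A₂): for all (A₁,B,β) ∈ P^un(A₁) and (A₁×A₂,C,γ) ∈ P^un(A₁×A₂), one has P^un_{pr₁}(A₁,B,β) ≤ (A₁×A₂,C,γ) if and only if (A₁,B,β) ≤ ∀_{pr₁}(A₁×A₂,C,γ). -/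
open CategoryTheory CategoryTheory.Limits Opposite

universe u v

variable {C : Type u} [Category.{v} C] [HasFiniteProducts C]

/-- The fibre of a slat-doctrine `P : Cᵒᵖ ⥤ Pos` over an object `X` of `C`. -/
abbrev Fib (P : Cᵒᵖ ⥤ PartOrd) (X : C) : Type _ := (P.obj (op X) : Type _)

/-- Reindexing along `f : X ⟶ Y` (the monotone map `P f : P Y → P X`). -/
def rIdx (P : Cᵒᵖ ⥤ PartOrd) {X Y : C} (f : X ⟶ Y) (a : Fib P Y) : Fib P X :=
  (P.map f.op).hom.toFun a

/-- Objects of the fibre of a quantifier completion over `A`: triples `(A, B, α)`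
with `α ∈ P (A × B)` (the component `A` being fixed). -/
abbrev QObj (P : Cᵒᵖ ⥤ PartOrd) (A : C) : Type _ := Σ B : C, Fib P (A ⨯ B)

/-- The order of the universal completion `P^un`:
`(A,B,α) ≤ (A,C,γ)` iff there is `g : A×C ⟶ B` with `P⟨pr_A,g⟩(α) ≤ γ`. -/
def UnLe (P : Cᵒᵖ ⥤ PartOrd) {A : C} (x y : QObj P A) : Prop :=
  ∃ g : A ⨯ y.1 ⟶ x.1, rIdx P (prod.lift prod.fst g) x.2 ≤ y.2

/-- The order of the existential completion `P^ex`: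
`(A,B,α) ≤ (A,C,γ)` iff there is `f : A×B ⟶ C` with `α ≤ P⟨pr_A,f⟩(γ)`. -/
def ExLe (P : Cᵒᵖ ⥤ PartOrd) {A : C} (x y : QObj P A) : Prop :=
  ∃ f : A ⨯ x.1 ⟶ y.1, x.2 ≤ rIdx P (prod.lift prod.fst f) y.2

/-- Reindexing of the completions along `f : X ⟶ Y`: `(Y,D,δ) ↦ (X,D,P_{f×1}(δ))`. -/
noncomputable def QReindex (P : Cᵒᵖ ⥤ PartOrd) {X Y : C} (f : X ⟶ Y) (y : QObj P Y) :
    QObj P X :=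
  ⟨y.1, rIdx P (prod.map f (𝟙 y.1)) y.2⟩

/-- The right adjoint `∀_{pr₁}` of the universal completion along the projection
`pr₁ : A₁×A₂ ⟶ A₁`: `(A₁×A₂, B, β) ↦ (A₁, A₂×B, β)` (via the associativity iso). -/
noncomputable def unForall (P : Cᵒᵖ ⥤ PartOrd) (A₁ A₂ : C) (x : QObj P (A₁ ⨯ A₂)) :
    QObj P A₁ :=
  ⟨A₂ ⨯ x.1, rIdx P (prod.associator A₁ A₂ x.1).inv x.2⟩

/-!
Both `P^un_{pr₁}(A₁,B,β) ≤ (A₁×A₂,C,γ)` and `(A₁,B,β) ≤ ∀_{pr₁}(A₁×A₂,C,γ)` unfold to the existence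
of a map `k : (A₁×A₂)×C ⟶ B` with `P⟨pr_{A₁}, k⟩(β) ≤ γ`: on the right the witness is `k` precomposed
with the associativity iso, which moves across the inequality since reindexing along an iso is an
order isomorphism. Monotonicity of `∀_{pr₁}` then holds as for any right adjoint between preorders.
-/

section Reindexing

variable {𝒞 : Type*} [Category 𝒞] (P : 𝒞ᵒᵖ ⥤ PartOrd)

lemma rIdx_id {X : 𝒞} (a : Fib P X) : rIdx P (𝟙 X) a = a := by
  simp [rIdx]

lemma rIdx_comp {X Y Z : 𝒞} (f : X ⟶ Y) (g : Y ⟶ Z) (a : Fib P Z) :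
    rIdx P (f ≫ g) a = rIdx P f (rIdx P g a) := by
  simp [rIdx]

lemma rIdx_mono {X Y : 𝒞} (f : X ⟶ Y) {a b : Fib P Y} (h : a ≤ b) :
    rIdx P f a ≤ rIdx P f b :=
  (P.map f.op).hom.monotone h

lemma le_rIdx_inv_iff {X Y : 𝒞} (e : X ≅ Y) {a : Fib P Y} {b : Fib P X} :
    a ≤ rIdx P e.inv b ↔ rIdx P e.hom a ≤ b := by
  constructor
  · intro h
    simpa [← rIdx_comp, rIdx_id] using rIdx_mono P e.hom h
  · intro h
    simpa [← rIdx_comp, rIdx_id] using rIdx_mono P e.inv h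

end Reindexing

section UniversalCompletion

variable {P : Cᵒᵖ ⥤ PartOrd}

lemma UnLe.refl {A : C} (x : QObj P A) : UnLe P x x :=
  ⟨prod.snd, by simp [rIdx_id]⟩

lemma UnLe.trans {A : C} {x y z : QObj P A} (hxy : UnLe P x y) (hyz : UnLe P y z) :
    UnLe P x z := by
  obtain ⟨g, hg⟩ := hxy
  obtain ⟨h, hh⟩ := hyz
  refine ⟨prod.lift prod.fst h ≫ g, ?_⟩
  have hlift : prod.lift prod.fst (prod.lift prod.fst h ≫ g) =
      prod.lift prod.fst h ≫ prod.lift prod.fst g := by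
    rw [prod.comp_lift, prod.lift_fst]
  rw [hlift, rIdx_comp]
  exact (rIdx_mono P _ hg).trans hh

lemma unLe_qReindex_fst_iff {A₁ A₂ : C} (b : QObj P A₁) (c : QObj P (A₁ ⨯ A₂)) :
    UnLe P (QReindex P (prod.fst : A₁ ⨯ A₂ ⟶ A₁) b) c ↔
      ∃ k : (A₁ ⨯ A₂) ⨯ c.1 ⟶ b.1, rIdx P (prod.lift (prod.fst ≫ prod.fst) k) b.2 ≤ c.2 := by
  obtain ⟨B, β⟩ := b
  obtain ⟨D, γ⟩ := c
  show (∃ k, rIdx P (prod.lift prod.fst k) (rIdx P (prod.map prod.fst (𝟙 B)) β) ≤ γ) ↔ _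
  simp only [← rIdx_comp, prod.lift_map, Category.comp_id]

lemma unLe_unForall_iff {A₁ A₂ : C} (b : QObj P A₁) (c : QObj P (A₁ ⨯ A₂)) :
    UnLe P b (unForall P A₁ A₂ c) ↔
      ∃ k : (A₁ ⨯ A₂) ⨯ c.1 ⟶ b.1, rIdx P (prod.lift (prod.fst ≫ prod.fst) k) b.2 ≤ c.2 := by
  obtain ⟨B, β⟩ := b
  obtain ⟨D, γ⟩ := c
  let α := prod.associator A₁ A₂ D
  show (∃ h : A₁ ⨯ (A₂ ⨯ D) ⟶ B, rIdx P (prod.lift prod.fst h) β ≤ rIdx P α.inv γ) ↔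
    ∃ k : (A₁ ⨯ A₂) ⨯ D ⟶ B, rIdx P (prod.lift (prod.fst ≫ prod.fst) k) β ≤ γ
  refine (α.homFromEquiv.exists_congr fun k => ?_).symm
  have hlift : α.hom ≫ prod.lift prod.fst (α.inv ≫ k) = prod.lift (prod.fst ≫ prod.fst) k := by
    rw [prod.comp_lift, Iso.hom_inv_id_assoc, prod.associator_hom, prod.lift_fst]
  rw [Iso.homFromEquiv_apply, le_rIdx_inv_iff, ← rIdx_comp, hlift]

end UniversalCompletion

/-- `∀_{pr₁}` is monotone and right adjoint to the reindexing `P^un_{pr₁}`. -/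
theorem unForall_right_adjoint (P : Cᵒᵖ ⥤ PartOrd) (A₁ A₂ : C) :
    (∀ x y : QObj P (A₁ ⨯ A₂), UnLe P x y →
        UnLe P (unForall P A₁ A₂ x) (unForall P A₁ A₂ y)) ∧
      (∀ (b : QObj P A₁) (c : QObj P (A₁ ⨯ A₂)),
        UnLe P (QReindex P (prod.fst : A₁ ⨯ A₂ ⟶ A₁) b) c ↔
          UnLe P b (unForall P A₁ A₂ c)) := by
  have adjunction (b : QObj P A₁) (c : QObj P (A₁ ⨯ A₂)) :
      UnLe P (QReindex P prod.fst b) c ↔ UnLe P b (unForall P A₁ A₂ c) :=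
    (unLe_qReindex_fst_iff b c).trans (unLe_unForall_iff b c).symm
  refine ⟨fun x y hxy => ?_, adjunction⟩
  have counit : UnLe P (QReindex P prod.fst (unForall P A₁ A₂ x)) x :=
    (adjunction _ x).2 (UnLe.refl _)
  exact (adjunction _ y).1 (counit.trans hxy)
end

section
/- Let P : C^op → Pos be a slat-doctrine over a category C with finite products. Let (−)^op : Pos → Pos denote the functor reversing the order of a poset. Then the universal completion of P is isomorphic to the opposite of the existential completion of the opposite doctrine: for every object A of C there is an order isomorphism P^un(A) ≅ ((((−)^op ∘ P)^ex)(A))^op, natural in A (i.e. commuting with the reindexing maps). -/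
open CategoryTheory CategoryTheory.Limits Opposite

universe u v

variable {C : Type u} [Category.{v} C] [HasFiniteProducts C]

/-- The transport map identifying objects of `P^un(A)` with objects of
`(((−)ᵒᵖ ∘ P)^ex (A))ᵒᵖ` (it is the identity on the underlying data). -/
noncomputable def toDualObj (P : Cᵒᵖ ⥤ PartOrd) (A : C) (x : QObj P A) :
    QObj (P ⋙ PartOrd.dual) A :=
  ⟨x.1, OrderDual.toDual x.2⟩

noncomputable def toDualObjEquiv (P : Cᵒᵖ ⥤ PartOrd) (A : C) :
    QObj P A ≃ QObj (P ⋙ PartOrd.dual) A where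
  toFun := toDualObj P A
  invFun z := ⟨z.1, OrderDual.ofDual z.2⟩
  left_inv _ := rfl
  right_inv _ := rfl

theorem toDualObj_bijective (P : Cᵒᵖ ⥤ PartOrd) (A : C) :
    Function.Bijective (toDualObj P A) :=
  (toDualObjEquiv P A).bijective

/-- Reindexing in `(−)ᵒᵖ ∘ P` is reindexing in `P`, and `≤` there is `≥` in `P`, so a witness
`g` of `UnLe P x y` is literally a witness of the dual `ExLe`. -/
theorem unLe_iff_exLe_toDualObj (P : Cᵒᵖ ⥤ PartOrd) {A : C} (x y : QObj P A) :
    UnLe P x y ↔ ExLe (P ⋙ PartOrd.dual) (toDualObj P A y) (toDualObj P A x) :=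
  Iff.rfl

theorem toDualObj_qReindex (P : Cᵒᵖ ⥤ PartOrd) {X Y : C} (f : X ⟶ Y) (x : QObj P Y) :
    toDualObj P X (QReindex P f x) = QReindex (P ⋙ PartOrd.dual) f (toDualObj P Y x) :=
  rfl

/-- The universal completion is the (fibrewise) opposite of the existential completion of
the opposite doctrine: `P^un(A) ≅ (((−)ᵒᵖ P)^ex (A))ᵒᵖ`, naturally in `A`. -/
theorem unLe_iff_dual_exLe (P : Cᵒᵖ ⥤ PartOrd) :
    (∀ A : C, Function.Bijective (toDualObj P A)) ∧
      (∀ (A : C) (x y : QObj P A),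
        UnLe P x y ↔ ExLe (P ⋙ PartOrd.dual) (toDualObj P A y) (toDualObj P A x)) ∧
      (∀ {X Y : C} (f : X ⟶ Y) (x : QObj P Y),
        toDualObj P X (QReindex P f x) = QReindex (P ⋙ PartOrd.dual) f (toDualObj P Y x)) :=
  ⟨toDualObj_bijective P, fun _ => unLe_iff_exLe_toDualObj P, toDualObj_qReindex P⟩
end
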